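/- Let N and M be triangulated subcategories of an essentially small triangulated category T. Then there is an equivalence of triangulated categories between the triangulated cokernel of the canonical functor N/(N ∩ M) → T/M (i.e. the Verdier quotient of T/M by the triangulated image of this functor) and the Verdier quotient T/(N ∨_thi M), where N ∨_thi M is the smallest thick subcategory of T containing both N and M. -/

import Mathlib

open CategoryTheory CategoryTheory.Limits CategoryTheory.Pretriangulated

universe w v u v₂ u₂ v₃ u₃ v₄ u₄ v₅ u₅ v₆ u₆

structure IsTriangulatedSub {C : Type u} [Category.{v} C] [HasZeroObject C] [HasShift C ℤ]
    [Preadditive C] [∀ n : ℤ, (shiftFunctor C n).Additive] [Pretriangulated C]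
    (P : C → Prop) : Prop where
  iso_closed : ∀ ⦃x y : C⦄, (x ≅ y) → P x → P y
  zero : ∀ x : C, IsZero x → P x
  shift : ∀ (x : C) (n : ℤ), P x → P (x⟦n⟧)
  two_of_three₁₂ : ∀ T ∈ distTriang C, P T.obj₁ → P T.obj₂ → P T.obj₃
  two_of_three₂₃ : ∀ T ∈ distTriang C, P T.obj₂ → P T.obj₃ → P T.obj₁
  two_of_three₁₃ : ∀ T ∈ distTriang C, P T.obj₁ → P T.obj₃ → P T.obj₂

def IsSummandClosed {C : Type u} [Category.{v} C] [Preadditive C]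
    [HasBinaryBiproducts C] (P : C → Prop) : Prop :=
  ∀ x y : C, P (x ⊞ y) → P x ∧ P y

def coneIn {C : Type u} [Category.{v} C] [HasZeroObject C] [HasShift C ℤ]
    [Preadditive C] [∀ n : ℤ, (shiftFunctor C n).Additive] [Pretriangulated C]
    (P : C → Prop) : MorphismProperty C :=
  fun X Y f => ∃ (Z : C) (g : Y ⟶ Z) (h : Z ⟶ X⟦(1 : ℤ)⟧),
    (Triangle.mk f g h ∈ distTriang C) ∧ P Z


/-- The triangulated closure of a family `S` of objects: the smallest triangulated
subcategory containing `S`, realized as the intersection of all triangulated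
subcategories containing `S`. -/
def triClosure {C : Type u} [Category.{v} C] [HasZeroObject C] [HasShift C ℤ]
    [Preadditive C] [∀ n : ℤ, (shiftFunctor C n).Additive] [Pretriangulated C]
    (S : C → Prop) : C → Prop :=
  fun x => ∀ P : C → Prop, IsTriangulatedSub P → (∀ z, S z → P z) → P x

/-- The thick closure of a family `S` of objects: the smallest thick subcategory
containing `S`, realized as the intersection of all thick subcategories containing
`S`. -/
def thickClosure {C : Type u} [Category.{v} C] [HasZeroObject C] [HasShift C ℤ]
    [Preadditive C] [∀ n : ℤ, (shiftFunctor C n).Additive] [Pretriangulated C]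
    [HasBinaryBiproducts C] (S : C → Prop) : C → Prop :=
  fun x => ∀ P : C → Prop, IsTriangulatedSub P → IsSummandClosed P →
    (∀ z, S z → P z) → P x

/-!
Write `T` for the thick closure of `N ∪ M` and `K` for the triangulated closure of the image of
`N` in `C/M`. Two triangulated localizations of `C` at the same class of morphisms are equivalent
as triangulated categories, so it suffices to show that `C ⥤ C/M ⥤ (C/M)/K` is a localization
at `T.trW`. The composite inverts `T.trW` because its kernel is thick and contains `N` and `M`.
Conversely, `K.trW` lies in the image of `T.trW` because `T` is saturated: an object
whose image in `C/M` is isomorphic to the image of an object of `T` lies in `T`. This holds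
because the kernel of `C ⥤ C/M` consists of shifts of direct summands of objects of `M`.
-/

open ZeroObject

lemma isSummandClosed_isZero_obj {C : Type u} [Category.{v} C] [Preadditive C]
    [HasBinaryBiproducts C] {D : Type u₂} [Category.{v₂} D] [HasZeroMorphisms D] (F : C ⥤ D) :
    IsSummandClosed (fun c => IsZero (F.obj c)) :=
  fun x y h => ⟨IsZero.of_mono (F.map (biprod.inl : x ⟶ x ⊞ y)) h,
    IsZero.of_mono (F.map (biprod.inr : y ⟶ x ⊞ y)) h⟩

section

variable {C : Type u} [Category.{v} C] [HasZeroObject C] [HasShift C ℤ]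
    [Preadditive C] [∀ n : ℤ, (shiftFunctor C n).Additive] [Pretriangulated C]

namespace IsTriangulatedSub

variable {P : C → Prop}

lemma of_two_of_three₁₂ (iso_closed : ∀ ⦃x y : C⦄, (x ≅ y) → P x → P y)
    (zero : ∀ x : C, IsZero x → P x) (shift : ∀ (x : C) (n : ℤ), P x → P (x⟦n⟧))
    (two_of_three₁₂ : ∀ T ∈ distTriang C, P T.obj₁ → P T.obj₂ → P T.obj₃) :
    IsTriangulatedSub P where
  iso_closed := iso_closed
  zero := zero
  shift := shift
  two_of_three₁₂ := two_of_three₁₂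
  two_of_three₂₃ T hT h₂ h₃ := iso_closed (shiftShiftNeg T.obj₁ (1 : ℤ))
    (shift _ (-1) (two_of_three₁₂ _ (rot_of_distTriang T hT) h₂ h₃))
  two_of_three₁₃ T hT h₁ h₃ := two_of_three₁₂ _ (inv_rot_of_distTriang T hT) (shift _ (-1) h₃) h₁

lemma isTriangulated (hP : IsTriangulatedSub P) : ObjectProperty.IsTriangulated P where
  exists_zero := ⟨0, isZero_zero C, hP.zero 0 (isZero_zero C)⟩
  isStableUnderShiftBy n := ⟨fun x hx => hP.shift x n hx⟩
  ext₂' T hT h₁ h₃ := ObjectProperty.le_isoClosure _ _ (hP.two_of_three₁₃ T hT h₁ h₃)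

end IsTriangulatedSub

lemma coneIn_eq_trW (P : C → Prop) : coneIn P = ObjectProperty.trW P := by
  ext X Y f
  exact ⟨fun ⟨Z, g, h, hT, hZ⟩ => ⟨Z, g, h, hT, hZ⟩, fun ⟨Z, g, h, hT, hZ⟩ => ⟨Z, g, h, hT, hZ⟩⟩

section Closures

variable (S : C → Prop)

lemma triClosure_isTriangulatedSub : IsTriangulatedSub (triClosure S) where
  iso_closed _ _ e hx P hP hS := hP.iso_closed e (hx P hP hS)
  zero x hx _ hP _ := hP.zero x hx
  shift x n hx P hP hS := hP.shift x n (hx P hP hS)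
  two_of_three₁₂ T hT h₁ h₂ P hP hS := hP.two_of_three₁₂ T hT (h₁ P hP hS) (h₂ P hP hS)
  two_of_three₂₃ T hT h₂ h₃ P hP hS := hP.two_of_three₂₃ T hT (h₂ P hP hS) (h₃ P hP hS)
  two_of_three₁₃ T hT h₁ h₃ P hP hS := hP.two_of_three₁₃ T hT (h₁ P hP hS) (h₃ P hP hS)

lemma le_triClosure : S ≤ triClosure S :=
  fun z hz _ _ hS => hS z hz

lemma triClosure_le {P : C → Prop} (hP : IsTriangulatedSub P) (hSP : S ≤ P) :
    triClosure S ≤ P :=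
  fun _ hx => hx P hP hSP

variable [HasBinaryBiproducts C]

lemma thickClosure_isTriangulatedSub : IsTriangulatedSub (thickClosure S) where
  iso_closed _ _ e hx P hP hs hS := hP.iso_closed e (hx P hP hs hS)
  zero x hx _ hP _ _ := hP.zero x hx
  shift x n hx P hP hs hS := hP.shift x n (hx P hP hs hS)
  two_of_three₁₂ T hT h₁ h₂ P hP hs hS :=
    hP.two_of_three₁₂ T hT (h₁ P hP hs hS) (h₂ P hP hs hS)
  two_of_three₂₃ T hT h₂ h₃ P hP hs hS :=
    hP.two_of_three₂₃ T hT (h₂ P hP hs hS) (h₃ P hP hs hS)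
  two_of_three₁₃ T hT h₁ h₃ P hP hs hS :=
    hP.two_of_three₁₃ T hT (h₁ P hP hs hS) (h₃ P hP hs hS)

lemma thickClosure_isSummandClosed : IsSummandClosed (thickClosure S) :=
  fun x y h => ⟨fun P hP hs hS => (hs x y (h P hP hs hS)).1,
    fun P hP hs hS => (hs x y (h P hP hs hS)).2⟩

lemma le_thickClosure : S ≤ thickClosure S :=
  fun z hz _ _ _ hS => hS z hz

lemma thickClosure_le {P : C → Prop} (hP : IsTriangulatedSub P) (hPs : IsSummandClosed P)
    (hSP : S ≤ P) : thickClosure S ≤ P :=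
  fun _ hx => hx P hP hPs hSP

end Closures

section Kernel

variable {D : Type u₂} [Category.{v₂} D] [HasZeroObject D] [HasShift D ℤ] [Preadditive D]
    [∀ n : ℤ, (shiftFunctor D n).Additive] [Pretriangulated D]
    (F : C ⥤ D) [F.CommShift ℤ] [F.IsTriangulated]

lemma isTriangulatedSub_isZero_obj : IsTriangulatedSub (fun c => IsZero (F.obj c)) :=
  .of_two_of_three₁₂ (fun _ _ e h => h.of_iso (F.mapIso e).symm) (fun _ hx => F.map_isZero hx)
    (fun _ n hx => ((shiftFunctor D n).map_isZero hx).of_iso ((F.commShiftIso n).app _))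
    (fun _ hT h₁ h₂ => Triangle.isZero₃_of_isZero₁₂ _ (F.map_distinguished _ hT) h₁ h₂)

lemma trW_isInvertedBy_of_isZero_obj {P : ObjectProperty C} (hP : ∀ c, P c → IsZero (F.obj c)) :
    P.trW.IsInvertedBy F := by
  rintro X Y f ⟨Z, g, h, hT, hZ⟩
  exact (Triangle.isZero₃_iff_isIso₁ _ (F.map_distinguished _ hT)).1 (hP Z hZ)

end Kernel

section VerdierQuotient

variable {D : Type u₂} [Category.{v₂} D] (L : C ⥤ D)
    (S : ObjectProperty C) [S.IsTriangulated] [L.IsLocalization S.trW]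

lemma isZero_obj_of_prop [Preadditive D] [L.Additive] {x : C} (hx : S x) :
    IsZero (L.obj x) := by
  have : IsIso (L.map (0 : x ⟶ 0)) := Localization.inverts L S.trW _
    ⟨_, _, _, rot_of_distTriang _ (contractible_distinguished x), S.le_shift 1 x hx⟩
  exact (L.map_isZero (isZero_zero C)).of_iso (asIso (L.map (0 : x ⟶ 0)))

variable [IsTriangulated C] [HasBinaryBiproducts C] {P : ObjectProperty C}

-- `L` kills `𝟙 x`, so some `s : x ⟶ Y` in `S.trW` is zero, and the cone of `0 : x ⟶ Y` is
-- `Y ⊞ x⟦1⟧`.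
lemma prop_of_isZero_obj (hP : IsTriangulatedSub P) (hPs : IsSummandClosed P) (hSP : S ≤ P)
    {x : C} (hx : IsZero (L.obj x)) : P x := by
  obtain ⟨Y, s, ⟨Z, g, h, hT, hZ⟩, fac⟩ :=
    (MorphismProperty.map_eq_iff_postcomp L S.trW (𝟙 x) 0).1 (hx.eq_of_src _ _)
  obtain rfl : s = 0 := by simpa using fac
  obtain ⟨e, -⟩ := exists_iso_binaryBiproduct_of_distTriang _ (rot_of_distTriang _ hT)
    (by simp only [Triangle.rotate_mor₃, Triangle.mk_mor₁]
        exact neg_eq_zero.2 (Functor.map_zero _ _ _))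
  have hx₁ : P (x⟦(1 : ℤ)⟧) := (hPs _ _ (hP.iso_closed e (hSP Z hZ))).2
  exact hP.iso_closed (shiftShiftNeg x (1 : ℤ)) (hP.shift _ (-1) hx₁)

variable [HasZeroObject D] [HasShift D ℤ] [Preadditive D] [∀ n : ℤ, (shiftFunctor D n).Additive]
    [Pretriangulated D] [L.CommShift ℤ] [L.IsTriangulated]

lemma prop_of_map_obj (hP : IsTriangulatedSub P) (hPs : IsSummandClosed P)
    (hSP : S ≤ P) {c : C} (hc : ObjectProperty.map P L (L.obj c)) : P c := by
  obtain ⟨t, ht, ⟨e⟩⟩ := hc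
  obtain ⟨φ, hφ⟩ := Localization.exists_leftFraction L S.trW e.hom
  have : IsIso (L.map φ.s) := Localization.inverts L S.trW φ.s φ.hs
  have : IsIso (L.map φ.f) := by
    rw [← MorphismProperty.LeftFraction.map_comp_map_s φ L (Localization.inverts L S.trW), ← hφ]
    infer_instance
  obtain ⟨z, g, h, hT⟩ := distinguished_cocone_triangle φ.f
  have hz : P z := prop_of_isZero_obj L S hP hPs hSP
    ((Triangle.isZero₃_iff_isIso₁ _ (L.map_distinguished _ hT)).2 ‹_›)
  obtain ⟨w, g', h', hT', hw⟩ := φ.hs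
  have hY' : P φ.Y' := hP.two_of_three₁₃ _ hT ht hz
  exact hP.two_of_three₂₃ _ hT' hY' (hSP w hw)

lemma isTriangulatedSub_map (hP : IsTriangulatedSub P) (hPs : IsSummandClosed P) (hSP : S ≤ P) :
    IsTriangulatedSub (P.map L) := by
  have := Localization.essSurj_mapArrow L S.trW
  refine .of_two_of_three₁₂ (fun _ _ e h => ObjectProperty.prop_of_iso _ e h) (fun x hx => ?_)
    (fun x n ⟨t, ht, ⟨e⟩⟩ => ⟨t⟦n⟧, hP.shift t n ht,
      ⟨(L.commShiftIso n).app t ≪≫ (shiftFunctor D n).mapIso e⟩⟩) (fun T hT h₁ h₂ => ?_)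
  · exact ⟨0, hP.zero 0 (isZero_zero C), ⟨(L.map_isZero (isZero_zero C)).iso hx⟩⟩
  · obtain ⟨T', hT', ⟨e⟩⟩ := L.mem_mapTriangle_essImage_of_distinguished T hT
    have h'₁ : P T'.obj₁ := prop_of_map_obj L S hP hPs hSP
      (ObjectProperty.prop_of_iso _ (Triangle.π₁.mapIso e).symm h₁)
    have h'₂ : P T'.obj₂ := prop_of_map_obj L S hP hPs hSP
      (ObjectProperty.prop_of_iso _ (Triangle.π₂.mapIso e).symm h₂)
    exact ⟨_, hP.two_of_three₁₂ T' hT' h'₁ h'₂, ⟨Triangle.π₃.mapIso e⟩⟩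

lemma trW_map_le_map_trW (hP : IsTriangulatedSub P) (hPs : IsSummandClosed P) (hSP : S ≤ P) :
    (P.map L).trW ≤ (ObjectProperty.trW P).map L := by
  have := Localization.essSurj_mapArrow L S.trW
  rintro X Y f ⟨Z, g, h, hT, hZ⟩
  obtain ⟨T', hT', ⟨e⟩⟩ := L.mem_mapTriangle_essImage_of_distinguished _ hT
  have h'₃ : P T'.obj₃ := prop_of_map_obj L S hP hPs hSP
    (ObjectProperty.prop_of_iso _ (Triangle.π₃.mapIso e).symm hZ)
  exact ⟨_, _, T'.mor₁, ⟨_, _, _, hT', h'₃⟩,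
    ⟨Arrow.isoMk (Triangle.π₁.mapIso e) (Triangle.π₂.mapIso e) e.hom.comm₁.symm⟩⟩

end VerdierQuotient

lemma exists_triangulated_equivalence_of_isLocalization
    {D₁ : Type u₂} [Category.{v₂} D₁] [HasZeroObject D₁] [HasShift D₁ ℤ] [Preadditive D₁]
    [∀ n : ℤ, (shiftFunctor D₁ n).Additive] [Pretriangulated D₁]
    {D₂ : Type u₃} [Category.{v₃} D₂] [HasZeroObject D₂] [HasShift D₂ ℤ] [Preadditive D₂]
    [∀ n : ℤ, (shiftFunctor D₂ n).Additive] [Pretriangulated D₂]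
    (L₁ : C ⥤ D₁) [L₁.CommShift ℤ] [L₁.IsTriangulated]
    (L₂ : C ⥤ D₂) [L₂.CommShift ℤ] [L₂.IsTriangulated]
    (W : MorphismProperty C) [W.IsCompatibleWithShift ℤ] [W.HasLeftCalculusOfFractions]
    [L₁.IsLocalization W] [L₂.IsLocalization W] :
    ∃ G : D₁ ⥤ D₂, G.IsEquivalence ∧ ∃ hc : G.CommShift ℤ, haveI := hc; G.IsTriangulated := by
  have := Localization.essSurj_mapArrow L₁ W
  let G := (Localization.uniq L₁ L₂ W).functor
  let hG : G.CommShift ℤ := Functor.commShiftOfLocalization L₁ W ℤ L₂ G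
  refine ⟨G, inferInstance, hG, ?_⟩
  exact Functor.isTriangulated_of_precomp_iso (Localization.Lifting.iso L₁ W L₂ G)

end

/-- Let `N` and `M` be triangulated subcategories of an essentially
small triangulated category `C`. Then the triangulated cokernel of the canonical
functor `N/(N ∩ M) → C/M` (the Verdier quotient of `C/M` by the triangulated image of
this functor, i.e. by the smallest triangulated subcategory containing the objects
`Q'(n)` for `n` in `N`) is equivalent, as a triangulated category, to the Verdier
quotient `C/(N ∨_thi M)` of `C` by the smallest thick subcategory containing `N`
and `M`. -/
theorem coker_equiv_quotient_by_thick_join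
    {C : Type u} [Category.{v} C] [HasZeroObject C] [HasShift C ℤ] [Preadditive C]
    [∀ n : ℤ, (shiftFunctor C n).Additive] [Pretriangulated C] [IsTriangulated C]
    [HasBinaryBiproducts C] [EssentiallySmall.{w} C]
    (N M : C → Prop) (hN : IsTriangulatedSub N) (hM : IsTriangulatedSub M)
    -- the Verdier quotient `C/M`
    {D : Type u₂} [Category.{v₂} D] [HasZeroObject D] [HasShift D ℤ] [Preadditive D]
    [∀ n : ℤ, (shiftFunctor D n).Additive] [Pretriangulated D] [IsTriangulated D]
    (Q' : C ⥤ D) [Q'.CommShift ℤ] [Q'.IsTriangulated] [Q'.IsLocalization (coneIn M)]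
    -- the cokernel: the Verdier quotient of `C/M` by the triangulated image of
    -- `N/(N ∩ M) → C/M`
    {E : Type u₃} [Category.{v₃} E] [HasZeroObject E] [HasShift E ℤ] [Preadditive E]
    [∀ n : ℤ, (shiftFunctor E n).Additive] [Pretriangulated E] [IsTriangulated E]
    (R : D ⥤ E) [R.CommShift ℤ] [R.IsTriangulated]
    [R.IsLocalization (coneIn
      (triClosure (fun y : D => ∃ n : C, N n ∧ Nonempty (y ≅ Q'.obj n))))]
    -- the Verdier quotient `C/(N ∨_thi M)`
    {E' : Type u₄} [Category.{v₄} E'] [HasZeroObject E'] [HasShift E' ℤ] [Preadditive E']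
    [∀ n : ℤ, (shiftFunctor E' n).Additive] [Pretriangulated E'] [IsTriangulated E']
    (R' : C ⥤ E') [R'.CommShift ℤ] [R'.IsTriangulated]
    [R'.IsLocalization (coneIn (thickClosure (fun z : C => N z ∨ M z)))] :
    ∃ G : E ⥤ E', G.IsEquivalence ∧
      ∃ hc : G.CommShift ℤ, haveI := hc; G.IsTriangulated := by
  set K := triClosure (fun y : D => ∃ n : C, N n ∧ Nonempty (y ≅ Q'.obj n))
  set T := thickClosure (fun z : C => N z ∨ M z)
  have hT := thickClosure_isTriangulatedSub (fun z : C => N z ∨ M z)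
  have hTs := thickClosure_isSummandClosed (fun z : C => N z ∨ M z)
  have hMT : M ≤ T := fun z hz => le_thickClosure _ z (Or.inr hz)
  have := hM.isTriangulated
  have := hT.isTriangulated
  have := (triClosure_isTriangulatedSub _).isTriangulated (P := K)
  have : Q'.IsLocalization (ObjectProperty.trW M) := coneIn_eq_trW M ▸ inferInstance
  have : R.IsLocalization (ObjectProperty.trW K) := coneIn_eq_trW K ▸ inferInstance
  have : R'.IsLocalization (ObjectProperty.trW T) := coneIn_eq_trW T ▸ inferInstance
  have hK : K ≤ ObjectProperty.map T Q' := triClosure_le _ (isTriangulatedSub_map Q' M hT hTs hMT)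
    fun y ⟨n, hn, ⟨e⟩⟩ => ⟨n, le_thickClosure _ n (Or.inl hn), ⟨e.symm⟩⟩
  have hTker : T ≤ fun c => IsZero ((Q' ⋙ R).obj c) :=
    thickClosure_le _ (isTriangulatedSub_isZero_obj _) (isSummandClosed_isZero_obj _) <| by
      rintro z (hz | hz)
      · exact isZero_obj_of_prop R K (le_triClosure _ _ ⟨z, hz, ⟨Iso.refl _⟩⟩)
      · exact R.map_isZero (isZero_obj_of_prop Q' M hz)
  have : (Q' ⋙ R).IsLocalization (ObjectProperty.trW T) :=
    Functor.IsLocalization.comp Q' R (ObjectProperty.trW M) (ObjectProperty.trW K) _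
      (trW_isInvertedBy_of_isZero_obj _ hTker) (ObjectProperty.trW_monotone hMT)
      ((ObjectProperty.trW_monotone hK).trans (trW_map_le_map_trW Q' M hT hTs hMT))
  exact exists_triangulated_equivalence_of_isLocalization (Q' ⋙ R) R' (ObjectProperty.trW T)
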